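/- Let K be a class of algebras of some fixed signature, let B ∈ HSP(K), and let μ, α be congruences on B. If α laxly centralizes μ with respect to the variety HSP(K), then there exist an algebra C ∈ HSP(K), a surjective homomorphism π : C → B, and congruences β, γ on C with →π β ≥ μ, →π γ ≥ α, and β ∧ γ = ⊥, such that moreover the quotients C/β and C/γ belong to SP(K). -/

import Mathlib

/-!
Basic universal algebra: signatures, algebras, homomorphisms, congruences
(forming a complete lattice), generated congruences, images and preimages of
congruences, quotient algebras, subalgebras, products, ultraproducts,
varieties (classes closed under H, S, P), the term-condition commutator,
relatively free algebras, and lax centrality.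
-/

universe u v

namespace UAlg

/-- A (finitary) signature: a type of operation symbols with arities. -/
structure Signature : Type (u + 1) where
  ops : Type u
  arity : ops → ℕ

/-- An algebra of signature `S`. -/
structure Algebra (S : Signature.{u}) : Type (u + 1) where
  carrier : Type u
  interp : ∀ o : S.ops, (Fin (S.arity o) → carrier) → carrier

variable {S : Signature.{u}}

/-- A homomorphism of algebras. -/
structure Hom (A B : Algebra S) : Type u where
  toFun : A.carrier → B.carrier
  map_interp : ∀ (o : S.ops) (a : Fin (S.arity o) → A.carrier),
    toFun (A.interp o a) = B.interp o (fun i => toFun (a i))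

/-- Composition of homomorphisms. -/
def Hom.comp {A B C : Algebra S} (g : Hom B C) (f : Hom A B) : Hom A C where
  toFun := g.toFun ∘ f.toFun
  map_interp o a := by
    simp only [Function.comp, f.map_interp, g.map_interp]

/-- A congruence on an algebra: an equivalence relation compatible with the
operations. -/
structure Cong (A : Algebra S) : Type u where
  r : A.carrier → A.carrier → Prop
  iseqv : Equivalence r
  compat : ∀ (o : S.ops) (a b : Fin (S.arity o) → A.carrier),
    (∀ i, r (a i) (b i)) → r (A.interp o a) (A.interp o b)

namespace Cong

variable {A : Algebra S}

theorem ext {c d : Cong A} (h : ∀ x y, c.r x y ↔ d.r x y) : c = d := by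
  cases c; cases d
  simp only [mk.injEq]
  funext x y
  exact propext (h x y)

instance : PartialOrder (Cong A) where
  le c d := ∀ x y, c.r x y → d.r x y
  le_refl c := fun _ _ h => h
  le_trans a b c hab hbc := fun x y h => hbc x y (hab x y h)
  le_antisymm a b h1 h2 := ext fun x y => ⟨h1 x y, h2 x y⟩

instance : InfSet (Cong A) where
  sInf s :=
    { r := fun x y => ∀ c ∈ s, c.r x y
      iseqv :=
        ⟨fun x c _ => c.iseqv.refl x,
         fun h c hc => c.iseqv.symm (h c hc),
         fun h1 h2 c hc => c.iseqv.trans (h1 c hc) (h2 c hc)⟩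
      compat := fun o a b h c hc => c.compat o a b fun i => h i c hc }

instance : CompleteLattice (Cong A) :=
  completeLatticeOfInf _ (fun s =>
    ⟨fun c hc x y h => h c hc, fun _ hd x y h c hc => hd hc x y h⟩)

end Cong

/-- The congruence generated by a binary relation. -/
def conGen (A : Algebra S) (s : A.carrier → A.carrier → Prop) : Cong A :=
  sInf {c : Cong A | ∀ x y, s x y → c.r x y}

/-- The kernel congruence of a homomorphism. -/
def Hom.ker {A B : Algebra S} (f : Hom A B) : Cong A where
  r x y := f.toFun x = f.toFun y
  iseqv := ⟨fun _ => rfl, Eq.symm, Eq.trans⟩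
  compat o a b h := by
    show f.toFun (A.interp o a) = f.toFun (A.interp o b)
    rw [f.map_interp, f.map_interp]
    exact congrArg _ (funext h)

/-- `conMap f α` (written `→f α` in the paper) is the congruence of `B`
generated by the image `f(α)` of the congruence `α` of `A`. -/
def conMap {A B : Algebra S} (f : Hom A B) (α : Cong A) : Cong B :=
  conGen B (fun x y => ∃ a a', α.r a a' ∧ f.toFun a = x ∧ f.toFun a' = y)

/-- The inverse image `f⁻¹(β)` of a congruence. -/
def conComap {A B : Algebra S} (f : Hom A B) (β : Cong B) : Cong A where
  r x y := β.r (f.toFun x) (f.toFun y)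
  iseqv :=
    ⟨fun _ => β.iseqv.refl _, fun h => β.iseqv.symm h,
     fun h1 h2 => β.iseqv.trans h1 h2⟩
  compat o a b h := by
    show β.r (f.toFun (A.interp o a)) (f.toFun (A.interp o b))
    rw [f.map_interp, f.map_interp]
    exact β.compat o _ _ h

/-- The setoid underlying a congruence. -/
def Cong.toSetoid {A : Algebra S} (c : Cong A) : Setoid A.carrier :=
  ⟨c.r, c.iseqv⟩

/-- The quotient algebra of an algebra by a congruence. -/
noncomputable def quotAlg (A : Algebra S) (c : Cong A) : Algebra S where
  carrier := Quotient c.toSetoid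
  interp o a := Quotient.mk c.toSetoid (A.interp o (fun i => (a i).out))

/-- The natural (quotient) homomorphism `A → A/c`. -/
def natHom (A : Algebra S) (c : Cong A) : Hom A (quotAlg A c) where
  toFun := Quotient.mk c.toSetoid
  map_interp o a := by
    apply Quotient.sound
    apply c.compat
    intro i
    show c.r (a i) (Quotient.mk c.toSetoid (a i)).out
    exact Quotient.exact ((Quotient.out_eq (Quotient.mk c.toSetoid (a i))).symm)

/-- A subuniverse: a subset closed under the operations. -/
structure Subuniverse (A : Algebra S) : Type u where
  carrier : Set A.carrier
  closed : ∀ (o : S.ops) (a : Fin (S.arity o) → A.carrier),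
    (∀ i, a i ∈ carrier) → A.interp o a ∈ carrier

/-- The subalgebra determined by a subuniverse. -/
def Subuniverse.alg {A : Algebra S} (s : Subuniverse A) : Algebra S where
  carrier := {x // x ∈ s.carrier}
  interp o a := ⟨A.interp o (fun i => (a i).1), s.closed o _ (fun i => (a i).2)⟩

/-- The product of a family of algebras. -/
def prodAlg {ι : Type u} (A : ι → Algebra S) : Algebra S where
  carrier := ∀ i, (A i).carrier
  interp o a i := (A i).interp o (fun j => a j i)

/-- A variety: a class of algebras closed under homomorphic images,
subalgebras, and products. -/
structure IsVariety (V : Algebra S → Prop) : Prop where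
  closed_hom : ∀ (A B : Algebra S) (f : Hom A B),
    Function.Surjective f.toFun → V A → V B
  closed_sub : ∀ (A : Algebra S) (s : Subuniverse A), V A → V s.alg
  closed_prod : ∀ (ι : Type u) (A : ι → Algebra S), (∀ i, V (A i)) → V (prodAlg A)

/-- `α` laxly centralizes `μ` with respect to the class `V`. -/
def LaxCentralizes (V : Algebra S → Prop) (B : Algebra S) (μ α : Cong B) : Prop :=
  ∃ C : Algebra S, V C ∧ ∃ (π : Hom C B) (β γ : Cong C),
    Function.Surjective π.toFun ∧ μ ≤ conMap π β ∧ α ≤ conMap π γ ∧ β ⊓ γ = ⊥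

/-- `B` is a homomorphic image of a member of `K`. -/
def InH (K : Algebra S → Prop) (B : Algebra S) : Prop :=
  ∃ A, K A ∧ ∃ f : Hom A B, Function.Surjective f.toFun

/-- `B` embeds into a product of members of `K`, i.e. `B ∈ SP(K)`. -/
def InSP (K : Algebra S → Prop) (B : Algebra S) : Prop :=
  ∃ (ι : Type u) (A : ι → Algebra S), (∀ i, K (A i)) ∧
    ∃ f : Hom B (prodAlg A), Function.Injective f.toFun

/-- `B ∈ HSP(K)`: `B` is a homomorphic image of an algebra embeddable in a
product of members of `K`. -/
def InHSP (K : Algebra S → Prop) (B : Algebra S) : Prop :=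
  ∃ C : Algebra S, InSP K C ∧ ∃ f : Hom C B, Function.Surjective f.toFun

/-- The congruence on a product given by an ultrafilter on the index set. -/
def ultraCong {ι : Type u} (A : ι → Algebra S) (U : Ultrafilter ι) :
    Cong (prodAlg A) where
  r x y := {i | x i = y i} ∈ U
  iseqv := by
    refine ⟨fun x => ?_, fun {x y} h => ?_, fun {x y z} h1 h2 => ?_⟩
    · have : {i | x i = x i} = Set.univ := by ext i; simp
      rw [this]; exact Filter.univ_mem
    · have : {i | y i = x i} = {i | x i = y i} := by ext i; exact eq_comm
      rw [this]; exact h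
    · refine Filter.mem_of_superset (Filter.inter_mem h1 h2) ?_
      intro i hi
      exact hi.1.trans hi.2
  compat o a b h := by
    have h1 : (⋂ j, {i | a j i = b j i}) ∈ (U : Filter ι) :=
      (Filter.iInter_mem).2 h
    refine Filter.mem_of_superset h1 ?_
    intro i hi
    simp only [Set.mem_iInter, Set.mem_setOf_eq] at hi
    show (A i).interp o (fun j => a j i) = (A i).interp o (fun j => b j i)
    exact congrArg _ (funext hi)

/-- `B ∈ HSP_u(K)`: `B` is a homomorphic image of an algebra embeddable in an
ultraproduct of members of `K`. -/
def InHSPu (K : Algebra S → Prop) (B : Algebra S) : Prop :=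
  ∃ (ι : Type u) (A : ι → Algebra S) (U : Ultrafilter ι), (∀ i, K (A i)) ∧
    ∃ C : Algebra S,
      (∃ g : Hom C (quotAlg (prodAlg A) (ultraCong A U)),
        Function.Injective g.toFun) ∧
      ∃ f : Hom C B, Function.Surjective f.toFun

/-- `μ` is the monolith of `B`: the minimum nontrivial congruence.
In particular its existence means `B` is subdirectly irreducible. -/
def IsMonolith (B : Algebra S) (μ : Cong B) : Prop :=
  μ ≠ ⊥ ∧ ∀ θ : Cong B, θ ≠ ⊥ → μ ≤ θ

/-- Terms of signature `S` over a set `X` of variables. -/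
inductive Tm (S : Signature.{u}) (X : Type v) : Type max u v where
  | var : X → Tm S X
  | app : (o : S.ops) → (Fin (S.arity o) → Tm S X) → Tm S X

/-- Evaluation of a term in an algebra under an assignment of the variables. -/
def Tm.eval {X : Type v} (A : Algebra S) (v : X → A.carrier) :
    Tm S X → A.carrier
  | .var x => v x
  | .app o t => A.interp o (fun i => Tm.eval A v (t i))

/-- The (term-condition) centralizing relation `C(α, β; δ)`. -/
def Centralizes {A : Algebra S} (α β δ : Cong A) : Prop :=
  ∀ (n : ℕ) (t : Tm S (Unit ⊕ Fin n)) (a b : A.carrier)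
    (c d : Fin n → A.carrier),
    α.r a b → (∀ i, β.r (c i) (d i)) →
    δ.r (t.eval A (Sum.elim (fun _ => a) c)) (t.eval A (Sum.elim (fun _ => a) d)) →
    δ.r (t.eval A (Sum.elim (fun _ => b) c)) (t.eval A (Sum.elim (fun _ => b) d))

/-- The commutator `[α, β]`: the least congruence `δ` such that `α`
centralizes `β` modulo `δ` (the Freese–McKenzie commutator, which is the
modular commutator in congruence-modular varieties). -/
def commutator {A : Algebra S} (α β : Cong A) : Cong A :=
  sInf {δ : Cong A | Centralizes α β δ}

/-- The term algebra over a set of variables. -/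
def termAlg (S : Signature.{u}) (X : Type u) : Algebra S :=
  ⟨Tm S X, Tm.app⟩

/-- The congruence of `V`-equations on the term algebra: two terms are related
iff they evaluate the same way in every member of `V`. -/
def eqThy (V : Algebra S → Prop) (X : Type u) : Cong (termAlg S X) where
  r s t := ∀ A : Algebra S, V A → ∀ v : X → A.carrier, s.eval A v = t.eval A v
  iseqv :=
    ⟨fun _ _ _ _ => rfl, fun h A hA v => (h A hA v).symm,
     fun h1 h2 A hA v => (h1 A hA v).trans (h2 A hA v)⟩
  compat o a b h A hA v := by
    show Tm.eval A v (Tm.app o a) = Tm.eval A v (Tm.app o b)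
    simp only [Tm.eval]
    exact congrArg _ (funext fun i => h i A hA v)

/-- The relatively free algebra of `V` on the set `X` of generators. -/
noncomputable def freeAlg (V : Algebra S → Prop) (X : Type u) : Algebra S :=
  quotAlg (termAlg S X) (eqThy V X)

/-- The canonical generators of the relatively free algebra. -/
def freeGen (V : Algebra S → Prop) (X : Type u) (x : X) :
    (freeAlg V X).carrier :=
  Quotient.mk (eqThy V X).toSetoid (Tm.var x)

/-- The homomorphism from the relatively free algebra of `V` to an algebra
`B ∈ V` induced by an assignment of the generators. -/
def evalFreeHom (V : Algebra S → Prop) (X : Type u) (B : Algebra S)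
    (hB : V B) (v : X → B.carrier) : Hom (freeAlg V X) B where
  toFun := Quotient.lift (fun t : Tm S X => t.eval B v) (fun s t h => h B hB v)
  map_interp o a := by
    show Tm.eval B v (Tm.app o (fun i => (a i).out)) = _
    simp only [Tm.eval]
    congr 1
    funext i
    conv_rhs => rw [← Quotient.out_eq (a i)]
    rfl

/-!
If `C ∈ HSP(K)` witnesses the lax centrality, write `C` as an image `g : D ↠ C` of some
`D ∈ SP(K)` and replace `C` by the subalgebra `C'` of `D²` of pairs `(x, y)` with
`g x β c γ g y` for some `c ∈ C`. Since `β ∧ γ = 0` this `c` is unique, which gives a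
surjective homomorphism `C' → C`. The kernels of the two projections `C' → D` meet in `0`
and lift `β` and `γ` respectively, while the quotients of `C'` by them embed into `D`.
-/

def Hom.id (A : Algebra S) : Hom A A := ⟨fun x => x, fun _ _ => rfl⟩

namespace Cong

variable {A : Algebra S}

theorem r_inf_iff {β γ : Cong A} {x y : A.carrier} :
    (β ⊓ γ).r x y ↔ β.r x y ∧ γ.r x y := by
  refine ⟨fun h => ⟨(inf_le_left : β ⊓ γ ≤ β) x y h, (inf_le_right : β ⊓ γ ≤ γ) x y h⟩, ?_⟩
  rintro ⟨hβ, hγ⟩ c hc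
  rcases hc with rfl | rfl
  exacts [hβ, hγ]

theorem r_bot_iff {x y : A.carrier} : (⊥ : Cong A).r x y ↔ x = y :=
  ⟨fun h => (bot_le : ⊥ ≤ (Hom.id A).ker) x y h, fun h => h ▸ (⊥ : Cong A).iseqv.refl x⟩

theorem eq_of_inf_eq_bot {β γ : Cong A} (hβγ : β ⊓ γ = ⊥) {x y : A.carrier}
    (hβ : β.r x y) (hγ : γ.r x y) : x = y :=
  r_bot_iff.1 (hβγ ▸ r_inf_iff.2 ⟨hβ, hγ⟩)

end Cong

theorem Hom.ker_inf_ker_eq_bot {A B₁ B₂ : Algebra S} {f₁ : Hom A B₁} {f₂ : Hom A B₂}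
    (hf : Function.Injective fun x => (f₁.toFun x, f₂.toFun x)) : f₁.ker ⊓ f₂.ker = ⊥ :=
  le_bot_iff.1 fun _ _ hxy =>
    Cong.r_bot_iff.2 (hf (Prod.ext (Cong.r_inf_iff.1 hxy).1 (Cong.r_inf_iff.1 hxy).2))

theorem rel_conMap {A B : Algebra S} (f : Hom A B) {θ : Cong A} {a a' : A.carrier}
    (h : θ.r a a') : (conMap f θ).r (f.toFun a) (f.toFun a') :=
  fun _ hc => hc _ _ ⟨a, a', h, rfl, rfl⟩

theorem conMap_le_conMap_comp {A A' B : Algebra S} (π : Hom A B) (h : Hom A' A)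
    {θ : Cong A} {θ' : Cong A'}
    (H : ∀ a a', θ.r a a' → ∃ X X', θ'.r X X' ∧ h.toFun X = a ∧ h.toFun X' = a') :
    conMap π θ ≤ conMap (π.comp h) θ' := by
  apply sInf_le
  rintro _ _ ⟨a, a', ha, rfl, rfl⟩
  obtain ⟨X, X', hX, rfl, rfl⟩ := H a a' ha
  exact rel_conMap (π.comp h) hX

def Hom.kerLift {A B : Algebra S} (f : Hom A B) : Hom (quotAlg A f.ker) B where
  toFun := Quotient.lift f.toFun fun _ _ h => h
  map_interp o a := by
    show f.toFun (A.interp o fun i => (a i).out) = _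
    rw [f.map_interp]
    congr 1
    funext i
    conv_rhs => rw [← Quotient.out_eq (a i)]
    rfl

theorem Hom.kerLift_injective {A B : Algebra S} (f : Hom A B) :
    Function.Injective f.kerLift.toFun := by
  rintro ⟨x⟩ ⟨y⟩ h
  exact Quotient.sound h

def Hom.sumPi {A : Algebra S} {ι₁ ι₂ : Type u} {A₁ : ι₁ → Algebra S} {A₂ : ι₂ → Algebra S}
    (f₁ : Hom A (prodAlg A₁)) (f₂ : Hom A (prodAlg A₂)) :
    Hom A (prodAlg (Sum.elim A₁ A₂)) where
  toFun x
    | .inl i => f₁.toFun x i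
    | .inr i => f₂.toFun x i
  map_interp o a := by
    funext j
    cases j with
    | inl i => exact congrFun (f₁.map_interp o a) i
    | inr i => exact congrFun (f₂.map_interp o a) i

namespace InSP

variable {K : Algebra S → Prop}

theorem of_injective {A B : Algebra S} (f : Hom A B) (hf : Function.Injective f.toFun)
    (hB : InSP K B) : InSP K A := by
  obtain ⟨ι, A', hA', e, he⟩ := hB
  exact ⟨ι, A', hA', e.comp f, he.comp hf⟩

theorem of_injective_prodMk {A B₁ B₂ : Algebra S} (f₁ : Hom A B₁) (f₂ : Hom A B₂)
    (hf : Function.Injective fun x => (f₁.toFun x, f₂.toFun x))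
    (hB₁ : InSP K B₁) (hB₂ : InSP K B₂) : InSP K A := by
  obtain ⟨ι₁, A₁, hA₁, e₁, he₁⟩ := hB₁
  obtain ⟨ι₂, A₂, hA₂, e₂, he₂⟩ := hB₂
  refine ⟨ι₁ ⊕ ι₂, Sum.elim A₁ A₂, fun j => j.rec hA₁ hA₂,
    Hom.sumPi (e₁.comp f₁) (e₂.comp f₂), fun x y hxy => hf ?_⟩
  exact Prod.ext (he₁ (funext fun i => congrFun hxy (.inl i)))
    (he₂ (funext fun i => congrFun hxy (.inr i)))

theorem quotAlg_ker {A B : Algebra S} (f : Hom A B) (hB : InSP K B) :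
    InSP K (quotAlg A f.ker) :=
  of_injective f.kerLift f.kerLift_injective hB

theorem inHSP {A : Algebra S} (hA : InSP K A) : InHSP K A :=
  ⟨A, hA, Hom.id A, Function.surjective_id⟩

end InSP

section PairAlg

variable {C D : Algebra S} (g : Hom D C) (β γ : Cong C)

def pairAlg : Algebra S where
  carrier := {p : D.carrier × D.carrier // ∃ c, β.r c (g.toFun p.1) ∧ γ.r c (g.toFun p.2)}
  interp o a := ⟨(D.interp o fun i => (a i).1.1, D.interp o fun i => (a i).1.2), by
    choose c hc using fun i => (a i).2
    refine ⟨C.interp o c, ?_, ?_⟩ <;> rw [g.map_interp]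
    exacts [β.compat o _ _ fun i => (hc i).1, γ.compat o _ _ fun i => (hc i).2]⟩

namespace pairAlg

def fst : Hom (pairAlg g β γ) D := ⟨fun X => X.1.1, fun _ _ => rfl⟩

def snd : Hom (pairAlg g β γ) D := ⟨fun X => X.1.2, fun _ _ => rfl⟩

theorem fst_ker_inf_snd_ker : (fst g β γ).ker ⊓ (snd g β γ).ker = ⊥ :=
  Hom.ker_inf_ker_eq_bot Subtype.val_injective

theorem inSP {K : Algebra S → Prop} (hD : InSP K D) : InSP K (pairAlg g β γ) :=
  InSP.of_injective_prodMk (fst g β γ) (snd g β γ) Subtype.val_injective hD hD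

variable {β γ}

theorem choose_eq (hβγ : β ⊓ γ = ⊥) (X : (pairAlg g β γ).carrier) {c : C.carrier}
    (hβ : β.r c (g.toFun X.1.1)) (hγ : γ.r c (g.toFun X.1.2)) : X.2.choose = c :=
  Cong.eq_of_inf_eq_bot hβγ (β.iseqv.trans X.2.choose_spec.1 (β.iseqv.symm hβ))
    (γ.iseqv.trans X.2.choose_spec.2 (γ.iseqv.symm hγ))

/-- Sends `(x, y)` to the unique `c` with `g x β c γ g y`. -/
noncomputable def toCod (hβγ : β ⊓ γ = ⊥) : Hom (pairAlg g β γ) C where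
  toFun X := X.2.choose
  map_interp o a := by
    refine choose_eq g hβγ _ (c := C.interp o fun i => (a i).2.choose) ?_ ?_
    · show β.r _ (g.toFun (D.interp o fun i => (a i).1.1))
      rw [g.map_interp]
      exact β.compat o _ _ fun i => (a i).2.choose_spec.1
    · show γ.r _ (g.toFun (D.interp o fun i => (a i).1.2))
      rw [g.map_interp]
      exact γ.compat o _ _ fun i => (a i).2.choose_spec.2

theorem toCod_mk (hβγ : β ⊓ γ = ⊥) {x y : D.carrier} {c : C.carrier}
    (hβ : β.r c (g.toFun x)) (hγ : γ.r c (g.toFun y)) :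
    (toCod g hβγ).toFun ⟨(x, y), c, hβ, hγ⟩ = c :=
  choose_eq g hβγ _ hβ hγ

variable {g}

theorem toCod_surjective (hβγ : β ⊓ γ = ⊥) (hg : Function.Surjective g.toFun) :
    Function.Surjective (toCod g hβγ).toFun := by
  intro c
  obtain ⟨x, rfl⟩ := hg c
  exact ⟨_, toCod_mk g hβγ (β.iseqv.refl _) (γ.iseqv.refl _)⟩

theorem exists_lift_fst_ker (hβγ : β ⊓ γ = ⊥) (hg : Function.Surjective g.toFun)
    (a a' : C.carrier) (h : β.r a a') :
    ∃ X X', (fst g β γ).ker.r X X' ∧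
      (toCod g hβγ).toFun X = a ∧ (toCod g hβγ).toFun X' = a' := by
  obtain ⟨x, rfl⟩ := hg a
  obtain ⟨y', rfl⟩ := hg a'
  refine ⟨_, _, ?_, toCod_mk g hβγ (β.iseqv.refl _) (γ.iseqv.refl (g.toFun x)),
    toCod_mk g hβγ (β.iseqv.symm h) (γ.iseqv.refl _)⟩
  rfl

theorem exists_lift_snd_ker (hβγ : β ⊓ γ = ⊥) (hg : Function.Surjective g.toFun)
    (a a' : C.carrier) (h : γ.r a a') :
    ∃ X X', (snd g β γ).ker.r X X' ∧
      (toCod g hβγ).toFun X = a ∧ (toCod g hβγ).toFun X' = a' := by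
  obtain ⟨x, rfl⟩ := hg a
  obtain ⟨x', rfl⟩ := hg a'
  refine ⟨_, _, ?_, toCod_mk g hβγ (β.iseqv.refl (g.toFun x)) (γ.iseqv.refl _),
    toCod_mk g hβγ (β.iseqv.refl _) (γ.iseqv.symm h)⟩
  rfl

end pairAlg

end PairAlg

theorem laxCentralizes_witness_in_SP_general (K : Algebra S → Prop) {B : Algebra S}
    (μ α : Cong B)
    (h : LaxCentralizes (InHSP K) B μ α) :
    ∃ C : Algebra S, InHSP K C ∧ ∃ (π : Hom C B) (β γ : Cong C),
      Function.Surjective π.toFun ∧ μ ≤ conMap π β ∧ α ≤ conMap π γ ∧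
      β ⊓ γ = ⊥ ∧ InSP K (quotAlg C β) ∧ InSP K (quotAlg C γ) := by
  obtain ⟨C, ⟨D, hD, g, hg⟩, π, β, γ, hπ, hμ, hα, hβγ⟩ := h
  refine ⟨pairAlg g β γ, (pairAlg.inSP g β γ hD).inHSP, π.comp (pairAlg.toCod g hβγ),
    (pairAlg.fst g β γ).ker, (pairAlg.snd g β γ).ker,
    hπ.comp (pairAlg.toCod_surjective hβγ hg), ?_, ?_, pairAlg.fst_ker_inf_snd_ker g β γ,
    InSP.quotAlg_ker _ hD, InSP.quotAlg_ker _ hD⟩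
  · exact hμ.trans (conMap_le_conMap_comp π _ (pairAlg.exists_lift_fst_ker hβγ hg))
  · exact hα.trans (conMap_le_conMap_comp π _ (pairAlg.exists_lift_snd_ker hβγ hg))

/-- If `B ∈ HSP(K)` and `α` laxly centralizes `μ` with respect
to the variety `HSP(K)`, then a witnessing tuple `(C, π, β, γ)` can be chosen
so that in addition `C/β` and `C/γ` belong to `SP(K)`. -/
theorem laxCentralizes_witness_in_SP (K : Algebra S → Prop) {B : Algebra S}
    (hB : InHSP K B) (μ α : Cong B)
    (h : LaxCentralizes (InHSP K) B μ α) :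
    ∃ C : Algebra S, InHSP K C ∧ ∃ (π : Hom C B) (β γ : Cong C),
      Function.Surjective π.toFun ∧ μ ≤ conMap π β ∧ α ≤ conMap π γ ∧
      β ⊓ γ = ⊥ ∧ InSP K (quotAlg C β) ∧ InSP K (quotAlg C γ) :=
  laxCentralizes_witness_in_SP_general K μ α h

end UAlg
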